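/- arXiv:1805.06925 — 2 statements merged into one kernel-verified Lean document; each statement's English description precedes it below -/
import Mathlib

section
/- Let μ > 0 and let f be twice continuously differentiable on [0,∞) with f'(0) = 0. Then the Poisson operator 𝒫^μ satisfies, for every x > 0, (𝒫^μ (f''))(x) = (𝒫^μ f)''(x) + (μ/x)·(𝒫^μ f)'(x), i.e. 𝒫^μ intertwines the second derivative D² and the Bessel operator B_μ: 𝒫^μ D² = B_μ 𝒫^μ. Moreover 𝒫^μ applied to the constant function 1 equals 1, i.e. C(μ)·x^{1−μ}·∫₀^x (x²−y²)^{μ/2−1} dy = 1 for every x > 0. -/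
open MeasureTheory Real

/-- The Bessel operator `B_μ u (y) = u''(y) + (μ/y) u'(y)`. -/
noncomputable def besselOp (μ : ℝ) (u : ℝ → ℝ) (y : ℝ) : ℝ :=
  deriv (deriv u) y + (μ / y) * deriv u y

/-- The constant `C(μ) = 2Γ((μ+1)/2)/(√π Γ(μ/2))` of the Poisson operator. -/
noncomputable def poissonC (μ : ℝ) : ℝ :=
  2 * Real.Gamma ((μ + 1) / 2) / (Real.sqrt Real.pi * Real.Gamma (μ / 2))

/-- The Poisson operator `𝒫^μ f (x) = C(μ) x^{1-μ} ∫₀^x f(y)(x²-y²)^{μ/2-1} dy`. -/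
noncomputable def poissonOp (μ : ℝ) (f : ℝ → ℝ) (x : ℝ) : ℝ :=
  poissonC μ * x ^ (1 - μ) * ∫ y in (0 : ℝ)..x, f y * (x ^ 2 - y ^ 2) ^ (μ / 2 - 1)

/-!
Substituting `y = x t` turns `𝒫^μ φ (x)` into `C(μ) ∫₀¹ φ(x t) (1 - t²)^{μ/2-1} dt`, so that
differentiation in `x` passes under the integral and multiplies the integrand by `t`.
Integrating `f'(x t)` by parts against `d/dt (1 - t²)^{μ/2} = -μ t (1 - t²)^{μ/2-1}` (the boundary
terms vanish since `f'(0) = 0` and the weight vanishes at `t = 1`) gives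
`𝒫^μ f'' = (𝒫^μ f)'' + (μ/x) (𝒫^μ f)'`. The normalisation `𝒫^μ 1 = 1` is the Beta integral
`∫₀¹ (1 - t²)^{μ/2-1} dt = B(1/2, μ/2) / 2`, after substituting `s = t²`.
-/

open Set Topology intervalIntegral

lemma intervalIntegrable_one_sub_sq_rpow {p : ℝ} (hp : -1 < p) :
    IntervalIntegrable (fun t : ℝ => (1 - t ^ 2) ^ p) volume 0 1 := by
  have hsub : IntervalIntegrable (fun t : ℝ => (1 - t) ^ p) volume 0 1 := by
    simpa using ((intervalIntegrable_rpow' (a := 0) (b := 1) hp).comp_sub_left 1).symm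
  have hprod : IntervalIntegrable (fun t : ℝ => (1 - t) ^ p * (1 + t) ^ p) volume 0 1 :=
    hsub.mul_continuousOn <| ContinuousOn.rpow_const (by fun_prop) fun t ht => by
      rw [uIcc_of_le zero_le_one] at ht
      exact Or.inl (by linarith [ht.1])
  refine intervalIntegrable_iff.mpr
    ((intervalIntegrable_iff.mp hprod).congr_fun (fun t ht => ?_) measurableSet_uIoc)
  rw [uIoc_of_le zero_le_one] at ht
  dsimp only
  rw [← Real.mul_rpow (by linarith [ht.2]) (by linarith [ht.1])]
  ring_nf

lemma intervalIntegrable_mul_one_sub_sq_rpow {F : ℝ → ℝ} {p : ℝ} (hF : ContinuousOn F (Icc 0 1))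
    (hp : -1 < p) :
    IntervalIntegrable (fun t => F t * (1 - t ^ 2) ^ p) volume 0 1 :=
  (intervalIntegrable_one_sub_sq_rpow hp).continuousOn_mul (by rwa [uIcc_of_le zero_le_one])

lemma integral_rpow_mul_one_sub_rpow {u v : ℝ} (hu : 0 < u) (hv : 0 < v) :
    ∫ s in (0 : ℝ)..1, s ^ (u - 1) * (1 - s) ^ (v - 1) = Gamma u * Gamma v / Gamma (u + v) := by
  have hbeta : ((∫ s in (0 : ℝ)..1, s ^ (u - 1) * (1 - s) ^ (v - 1) : ℝ) : ℂ)
      = Complex.betaIntegral u v := by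
    rw [Complex.betaIntegral, ← intervalIntegral.integral_ofReal]
    refine integral_congr fun s hs => ?_
    rw [uIcc_of_le zero_le_one] at hs
    push_cast
    rw [← Complex.ofReal_one, ← Complex.ofReal_sub, Complex.ofReal_cpow hs.1,
      Complex.ofReal_cpow (by linarith [hs.2])]
    push_cast
    ring_nf
  rw [Complex.betaIntegral_eq_Gamma_mul_div _ _ (by simpa) (by simpa), ← Complex.ofReal_add,
    Complex.Gamma_ofReal, Complex.Gamma_ofReal, Complex.Gamma_ofReal] at hbeta
  exact_mod_cast hbeta

lemma integral_one_sub_sq_rpow {p : ℝ} (hp : 0 < p) :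
    ∫ t in (0 : ℝ)..1, (1 - t ^ 2) ^ (p - 1) = √π * Gamma p / (2 * Gamma (p + 1 / 2)) := by
  have hsq : ∀ t ∈ Ioo (0 : ℝ) 1,
      HasDerivWithinAt (fun t : ℝ => t ^ 2) (2 * t) (Ioo 0 1) t :=
    fun t _ => by simpa using (hasDerivAt_pow 2 t).hasDerivWithinAt
  have himage : (fun t : ℝ => t ^ 2) '' Ioo 0 1 = Ioo 0 1 := by
    ext s
    constructor
    · rintro ⟨t, ht, rfl⟩
      exact ⟨pow_pos ht.1 2, by nlinarith [ht.1, ht.2]⟩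
    · intro hs
      exact ⟨√s, ⟨sqrt_pos.2 hs.1, (sqrt_lt' one_pos).2 (by simpa using hs.2)⟩,
        sq_sqrt hs.1.le⟩
  have hsubst := integral_image_eq_integral_abs_deriv_smul measurableSet_Ioo hsq
    ((pow_left_strictMonoOn₀ two_ne_zero).mono fun _ ht => ht.1.le).injOn
    (fun s : ℝ => s ^ ((1 : ℝ) / 2 - 1) * (1 - s) ^ (p - 1))
  have hintegrand : ∀ t ∈ Ioo (0 : ℝ) 1,
      |2 * t| • ((t ^ 2) ^ ((1 : ℝ) / 2 - 1) * (1 - t ^ 2) ^ (p - 1))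
        = 2 * (1 - t ^ 2) ^ (p - 1) := by
    intro t ht
    rw [smul_eq_mul, abs_of_pos (by linarith [ht.1]), ← rpow_natCast, ← rpow_mul ht.1.le]
    norm_num
    rw [rpow_neg_one]
    field_simp [ht.1.ne']
  rw [himage, ← integral_Ioc_eq_integral_Ioo, ← intervalIntegral.integral_of_le zero_le_one,
    integral_rpow_mul_one_sub_rpow one_half_pos hp,
    setIntegral_congr_fun measurableSet_Ioo hintegrand, MeasureTheory.integral_const_mul,
    ← integral_Ioc_eq_integral_Ioo, ← intervalIntegral.integral_of_le zero_le_one,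
    Gamma_one_half_eq, add_comm (1 / 2)] at hsubst
  have hΓ := (Gamma_pos_of_pos (by linarith : 0 < p + 1 / 2)).ne'
  rw [div_eq_iff hΓ] at hsubst
  rw [eq_div_iff (mul_ne_zero two_ne_zero hΓ), hsubst]
  ring

lemma hasDerivAt_derivWithin_Ici {φ : ℝ → ℝ} (hφ : ContDiffOn ℝ 1 φ (Ici 0)) {y : ℝ}
    (hy : 0 < y) : HasDerivAt φ (derivWithin φ (Ici 0) y) y := by
  rw [derivWithin_of_mem_nhds (Ici_mem_nhds hy)]
  exact ((hφ.differentiableOn one_ne_zero y hy.le).differentiableAt (Ici_mem_nhds hy)).hasDerivAt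

lemma deriv_deriv_eq_derivWithin_Ici (f : ℝ → ℝ) {y : ℝ} (hy : 0 < y) :
    deriv (deriv f) y = derivWithin (derivWithin f (Ici 0)) (Ici 0) y := by
  have hderiv : deriv f =ᶠ[𝓝 y] derivWithin f (Ici 0) := by
    filter_upwards [Ioi_mem_nhds hy] with z hz
    exact (derivWithin_of_mem_nhds (Ici_mem_nhds hz)).symm
  rw [hderiv.deriv_eq, derivWithin_of_mem_nhds (Ici_mem_nhds hy)]

noncomputable def poissonMoment (μ : ℝ) (k : ℕ) (φ : ℝ → ℝ) (x : ℝ) : ℝ :=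
  ∫ t in (0 : ℝ)..1, t ^ k * φ (x * t) * (1 - t ^ 2) ^ (μ / 2 - 1)

lemma poissonMoment_congr_Ioi {μ : ℝ} (k : ℕ) {φ ψ : ℝ → ℝ} (h : EqOn φ ψ (Ioi 0)) {x : ℝ}
    (hx : 0 < x) : poissonMoment μ k φ x = poissonMoment μ k ψ x := by
  refine integral_congr_ae (ae_of_all _ fun t ht => ?_)
  rw [uIoc_of_le zero_le_one] at ht
  rw [h (mul_pos hx ht.1)]

lemma intervalIntegrable_poissonMoment_integrand {μ : ℝ} (hμ : 0 < μ) (k : ℕ) {φ : ℝ → ℝ}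
    (hφ : ContinuousOn φ (Ici 0)) {x : ℝ} (hx : 0 ≤ x) :
    IntervalIntegrable (fun t => t ^ k * φ (x * t) * (1 - t ^ 2) ^ (μ / 2 - 1)) volume 0 1 :=
  intervalIntegrable_mul_one_sub_sq_rpow
    ((continuousOn_pow k).mul (hφ.comp (by fun_prop) fun t ht => mul_nonneg hx ht.1))
    (by linarith)

lemma poissonOp_eq_poissonMoment (μ : ℝ) (φ : ℝ → ℝ) {x : ℝ} (hx : 0 < x) :
    poissonOp μ φ x = poissonC μ * poissonMoment μ 0 φ x := by
  have hscale : ∫ y in (0 : ℝ)..x, φ y * (x ^ 2 - y ^ 2) ^ (μ / 2 - 1)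
      = x * ∫ t in (0 : ℝ)..1, φ (x * t) * (x ^ 2 - (x * t) ^ 2) ^ (μ / 2 - 1) := by
    rw [intervalIntegral.integral_comp_mul_left (fun y => φ y * (x ^ 2 - y ^ 2) ^ (μ / 2 - 1))
      hx.ne', mul_zero, mul_one, smul_eq_mul, mul_inv_cancel_left₀ hx.ne']
  have hkernel : ∀ t ∈ uIcc (0 : ℝ) 1,
      φ (x * t) * (x ^ 2 - (x * t) ^ 2) ^ (μ / 2 - 1)
        = x ^ (μ - 2) * (t ^ 0 * φ (x * t) * (1 - t ^ 2) ^ (μ / 2 - 1)) := by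
    intro t ht
    rw [uIcc_of_le zero_le_one] at ht
    rw [show x ^ 2 - (x * t) ^ 2 = x ^ 2 * (1 - t ^ 2) by ring,
      mul_rpow (by positivity) (by nlinarith [ht.1, ht.2]), ← rpow_natCast, ← rpow_mul hx.le]
    ring_nf
  have hpow : x ^ (1 - μ) * (x * x ^ (μ - 2)) = 1 := by
    rw [mul_comm x, ← rpow_add_one hx.ne', ← rpow_add hx, show 1 - μ + (μ - 2 + 1) = 0 by ring,
      rpow_zero]
  rw [poissonOp, hscale, integral_congr hkernel, intervalIntegral.integral_const_mul, poissonMoment]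
  linear_combination
    (poissonC μ * ∫ t in (0 : ℝ)..1, t ^ 0 * φ (x * t) * (1 - t ^ 2) ^ (μ / 2 - 1)) * hpow

lemma poissonOp_const_one {μ x : ℝ} (hμ : 0 < μ) (hx : 0 < x) :
    poissonOp μ (fun _ => 1) x = 1 := by
  have hweight := integral_one_sub_sq_rpow (half_pos hμ)
  rw [show μ / 2 + 1 / 2 = (μ + 1) / 2 by ring] at hweight
  simp only [poissonOp_eq_poissonMoment _ _ hx, poissonMoment, pow_zero, mul_one, one_mul, hweight,
    poissonC]
  field_simp

lemma hasDerivAt_poissonMoment {μ : ℝ} (hμ : 0 < μ) (k : ℕ) {φ : ℝ → ℝ}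
    (hφ : ContDiffOn ℝ 1 φ (Ici 0)) {x₀ : ℝ} (hx₀ : 0 < x₀) :
    HasDerivAt (poissonMoment μ k φ) (poissonMoment μ (k + 1) (derivWithin φ (Ici 0)) x₀) x₀ := by
  set ψ := derivWithin φ (Ici 0)
  have hψ : ContinuousOn ψ (Ici 0) := hφ.continuousOn_derivWithin (uniqueDiffOn_Ici 0) le_rfl
  obtain ⟨M, hM⟩ := (isCompact_Icc (a := 0) (b := 2 * x₀)).exists_bound_of_continuousOn
    (hψ.mono Icc_subset_Ici_self)
  have hs : Ioo 0 (2 * x₀) ∈ 𝓝 x₀ := Ioo_mem_nhds hx₀ (by linarith)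
  have hbound : ∀ t ∈ uIoc (0 : ℝ) 1, ∀ x ∈ Ioo 0 (2 * x₀),
      ‖t ^ (k + 1) * ψ (x * t) * (1 - t ^ 2) ^ (μ / 2 - 1)‖ ≤ M * (1 - t ^ 2) ^ (μ / 2 - 1) := by
    intro t ht x hx
    rw [uIoc_of_le zero_le_one] at ht
    have hw : 0 ≤ (1 - t ^ 2) ^ (μ / 2 - 1) := rpow_nonneg (by nlinarith [ht.1, ht.2]) _
    have htk : ‖t ^ (k + 1)‖ ≤ 1 := by
      rw [norm_pow, Real.norm_of_nonneg ht.1.le]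
      exact pow_le_one₀ ht.1.le ht.2
    have hψM : ‖ψ (x * t)‖ ≤ M := hM _ ⟨by nlinarith [ht.1, hx.1], by nlinarith [ht.1, ht.2, hx.2]⟩
    rw [norm_mul, norm_mul, Real.norm_of_nonneg hw]
    gcongr
    exact (mul_le_mul htk hψM (norm_nonneg _) zero_le_one).trans_eq (one_mul M)
  have hderiv : ∀ t ∈ uIoc (0 : ℝ) 1, ∀ x ∈ Ioo 0 (2 * x₀),
      HasDerivAt (fun x => t ^ k * φ (x * t) * (1 - t ^ 2) ^ (μ / 2 - 1))
        (t ^ (k + 1) * ψ (x * t) * (1 - t ^ 2) ^ (μ / 2 - 1)) x := by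
    intro t ht x hx
    rw [uIoc_of_le zero_le_one] at ht
    have hφt : HasDerivAt (fun x => φ (x * t)) (ψ (x * t) * t) x :=
      (hasDerivAt_derivWithin_Ici hφ (mul_pos hx.1 ht.1)).comp x (hasDerivAt_mul_const t)
    exact ((hφt.const_mul (t ^ k)).mul_const ((1 - t ^ 2) ^ (μ / 2 - 1))).congr_deriv (by ring)
  have hint : ∀ x ∈ Ioo (0 : ℝ) (2 * x₀), IntervalIntegrable
      (fun t => t ^ k * φ (x * t) * (1 - t ^ 2) ^ (μ / 2 - 1)) volume 0 1 :=
    fun x hx => intervalIntegrable_poissonMoment_integrand hμ k hφ.continuousOn hx.1.le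
  exact (intervalIntegral.hasDerivAt_integral_of_dominated_loc_of_deriv_le hs
    (Filter.eventually_of_mem hs fun x hx => (hint x hx).def'.aestronglyMeasurable)
    (hint x₀ ⟨hx₀, by linarith⟩)
    (intervalIntegrable_poissonMoment_integrand hμ (k + 1) hψ hx₀.le).def'.aestronglyMeasurable
    (ae_of_all _ hbound) ((intervalIntegrable_one_sub_sq_rpow (by linarith)).const_mul M)
    (ae_of_all _ hderiv)).2

lemma hasDerivAt_poissonOp {μ : ℝ} (hμ : 0 < μ) {φ : ℝ → ℝ} (hφ : ContDiffOn ℝ 1 φ (Ici 0))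
    {x : ℝ} (hx : 0 < x) :
    HasDerivAt (poissonOp μ φ) (poissonC μ * poissonMoment μ 1 (derivWithin φ (Ici 0)) x) x := by
  refine ((hasDerivAt_poissonMoment hμ 0 hφ hx).const_mul (poissonC μ)).congr_of_eventuallyEq ?_
  filter_upwards [Ioi_mem_nhds hx] with y hy using poissonOp_eq_poissonMoment μ φ hy

lemma poissonMoment_zero_derivWithin {μ : ℝ} (hμ : 0 < μ) {G : ℝ → ℝ}
    (hG : ContDiffOn ℝ 1 G (Ici 0)) (hG0 : G 0 = 0) {x : ℝ} (hx : 0 < x) :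
    poissonMoment μ 0 (derivWithin G (Ici 0)) x
      = poissonMoment μ 2 (derivWithin G (Ici 0)) x + μ / x * poissonMoment μ 1 G x := by
  set G' := derivWithin G (Ici 0)
  have hG'c : ContinuousOn G' (Ici 0) := hG.continuousOn_derivWithin (uniqueDiffOn_Ici 0) le_rfl
  have hcomp : ∀ {g : ℝ → ℝ}, ContinuousOn g (Ici 0) →
      ContinuousOn (fun t => g (x * t)) (Icc 0 1) :=
    fun hg => hg.comp (by fun_prop) fun t ht => mul_nonneg hx.le ht.1
  have hu : ∀ t ∈ Ioo (min (0 : ℝ) 1) (max 0 1),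
      HasDerivAt (fun t => G (x * t)) (x * G' (x * t)) t := by
    intro t ht
    rw [min_eq_left zero_le_one, max_eq_right zero_le_one] at ht
    exact ((hasDerivAt_derivWithin_Ici hG (mul_pos hx ht.1)).comp t
      (hasDerivAt_const_mul x)).congr_deriv (mul_comm _ _)
  have hv : ∀ t ∈ Ioo (min (0 : ℝ) 1) (max 0 1),
      HasDerivAt (fun t : ℝ => (1 - t ^ 2) ^ (μ / 2)) (-μ * t * (1 - t ^ 2) ^ (μ / 2 - 1)) t := by
    intro t ht
    rw [min_eq_left zero_le_one, max_eq_right zero_le_one] at ht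
    have hpos : 1 - t ^ 2 ≠ 0 := by nlinarith [ht.1, ht.2]
    exact (((hasDerivAt_pow 2 t).const_sub 1).rpow_const (Or.inl hpos)).congr_deriv
      (by push_cast; ring)
  have hibp := integral_mul_deriv_eq_deriv_mul_of_hasDerivAt
    ((hcomp hG.continuousOn).mono (uIcc_of_le zero_le_one).subset)
    ((ContinuousOn.rpow_const (by fun_prop) fun t _ => Or.inr (by positivity)).mono
      (uIcc_of_le zero_le_one).subset) hu hv
    ((hcomp hG'c).const_smul x |>.intervalIntegrable_of_Icc zero_le_one)
    (intervalIntegrable_mul_one_sub_sq_rpow (F := fun t => -μ * t) (by fun_prop) (by linarith))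
  have hboundary :
      G (x * 1) * (1 - 1 ^ 2 : ℝ) ^ (μ / 2) - G (x * 0) * (1 - 0 ^ 2 : ℝ) ^ (μ / 2) = 0 := by
    simp [hG0, zero_rpow (half_pos hμ).ne']
  have hleft : ∫ t in (0 : ℝ)..1, G (x * t) * (-μ * t * (1 - t ^ 2) ^ (μ / 2 - 1))
      = -μ * poissonMoment μ 1 G x := by
    rw [poissonMoment, ← intervalIntegral.integral_const_mul]
    exact integral_congr fun t _ => by ring
  have hright : ∫ t in (0 : ℝ)..1, x * G' (x * t) * (1 - t ^ 2) ^ (μ / 2)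
      = x * (poissonMoment μ 0 G' x - poissonMoment μ 2 G' x) := by
    rw [poissonMoment, poissonMoment, ← integral_sub
      (intervalIntegrable_poissonMoment_integrand hμ 0 hG'c hx.le)
      (intervalIntegrable_poissonMoment_integrand hμ 2 hG'c hx.le),
      ← intervalIntegral.integral_const_mul]
    refine integral_congr fun t ht => ?_
    rw [uIcc_of_le zero_le_one] at ht
    have hsplit : (1 - t ^ 2) ^ (μ / 2) = (1 - t ^ 2) * (1 - t ^ 2) ^ (μ / 2 - 1) := by
      rw [← rpow_one_add' (by nlinarith [ht.1, ht.2]) (by linarith)]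
      ring_nf
    simp only [hsplit]
    ring
  rw [hboundary, hleft, hright] at hibp
  field_simp
  linear_combination hibp

/-- the Poisson operator intertwines `D²` and the Bessel operator `B_μ`,
i.e. `𝒫^μ D² = B_μ 𝒫^μ`, and `𝒫^μ 1 = 1`. -/
theorem poisson_transmutation (μ : ℝ) (hμ : 0 < μ) (f : ℝ → ℝ)
    (hf : ContDiffOn ℝ 2 f (Set.Ici (0 : ℝ)))
    (hf'0 : derivWithin f (Set.Ici (0 : ℝ)) 0 = 0) :
    ∀ x : ℝ, 0 < x →
      poissonOp μ (fun y => deriv (deriv f) y) x = besselOp μ (poissonOp μ f) x ∧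
      poissonC μ * x ^ (1 - μ) * (∫ y in (0 : ℝ)..x, (x ^ 2 - y ^ 2) ^ (μ / 2 - 1)) = 1 := by
  intro x hx
  refine ⟨?_, by simpa [poissonOp] using poissonOp_const_one hμ hx⟩
  set G := derivWithin f (Ici 0)
  have hG : ContDiffOn ℝ 1 G (Ici 0) := hf.derivWithin (uniqueDiffOn_Ici 0) le_rfl
  have hderiv : deriv (poissonOp μ f) =ᶠ[𝓝 x] fun y => poissonC μ * poissonMoment μ 1 G y := by
    filter_upwards [Ioi_mem_nhds hx] with y hy
    exact (hasDerivAt_poissonOp hμ (hf.of_le one_le_two) hy).deriv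
  have hderiv2 : deriv (deriv (poissonOp μ f)) x
      = poissonC μ * poissonMoment μ 2 (derivWithin G (Ici 0)) x := by
    rw [hderiv.deriv_eq]
    exact ((hasDerivAt_poissonMoment hμ 1 hG hx).const_mul (poissonC μ)).deriv
  rw [besselOp, hderiv2, hderiv.eq_of_nhds, poissonOp_eq_poissonMoment _ _ hx,
    poissonMoment_congr_Ioi 0 (fun y hy => deriv_deriv_eq_derivWithin_Ici f hy) hx,
    poissonMoment_zero_derivWithin hμ hG hf'0 hx]
  ring
end

section
/- Let μ > 0 and let f : ℝ → ℝ be twice continuously differentiable. Then the function u(x,t) = (Γ(μ)/Γ(μ/2)²)·∫₀¹ f(x+t(2p−1))·(p(1−p))^{μ/2−1} dp solves the Cauchy problem: u_xx = u_tt + (μ/t)·u_t for x ∈ ℝ, t > 0, with lim_{t→0+} u(x,t) = f(x) and lim_{t→0+} u_t(x,t) = 0 for every x ∈ ℝ. -/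
/-!
Differentiating under the integral sign, `u_xx - u_tt` is the mean of `f''` against the
weight `(1 - (2p - 1)²) (p(1-p))^(μ/2-1) = 4 (p(1-p))^(μ/2)`. Since `(p(1-p))^(μ/2)` vanishes
at `p = 0, 1`, an integration by parts in `p` turns this into `(μ/t) u_t`. At `t = 0` the mean
reduces to `f(x)` times the Beta integral `B(μ/2, μ/2) = Γ(μ/2)²/Γ(μ)`, and `u_t` to `f'(x)`
times the odd moment `∫₀¹ (2p - 1) (p(1-p))^(μ/2-1) dp = 0`.
-/

open MeasureTheory Real Filter intervalIntegral Set

theorem ofReal_mul_one_sub_rpow_sub_one {p : ℝ} (hp : p ∈ Icc (0 : ℝ) 1) (s : ℝ) :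
    (((p * (1 - p)) ^ (s - 1) : ℝ) : ℂ) =
      (p : ℂ) ^ ((s : ℂ) - 1) * (1 - (p : ℂ)) ^ ((s : ℂ) - 1) := by
  have h1p : 0 ≤ 1 - p := sub_nonneg.2 hp.2
  rw [Real.mul_rpow hp.1 h1p, Complex.ofReal_mul, Complex.ofReal_cpow hp.1,
    Complex.ofReal_cpow h1p]
  push_cast
  rfl

theorem intervalIntegrable_mul_one_sub_rpow {s : ℝ} (hs : -1 < s) :
    IntervalIntegrable (fun p => (p * (1 - p)) ^ s) volume 0 1 := by
  have hβ := (Complex.betaIntegral_convergent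
    (u := ((s + 1 : ℝ) : ℂ)) (v := ((s + 1 : ℝ) : ℂ))
    (by simp; linarith) (by simp; linarith)).def'
  refine intervalIntegrable_iff.2
    ((show IntegrableOn _ _ _ from hβ.re).congr_fun (fun p hp => ?_) measurableSet_uIoc)
  have hp' : p ∈ Icc (0 : ℝ) 1 := by
    rw [uIoc_of_le zero_le_one] at hp; exact Ioc_subset_Icc_self hp
  have key := ofReal_mul_one_sub_rpow_sub_one hp' (s + 1)
  rw [add_sub_cancel_right] at key
  exact (congrArg Complex.re key.symm).trans (Complex.ofReal_re _)

theorem integral_mul_one_sub_rpow_sub_one {s : ℝ} (hs : 0 < s) :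
    ∫ p in (0 : ℝ)..1, (p * (1 - p)) ^ (s - 1) = Gamma s ^ 2 / Gamma (2 * s) := by
  have hβ : Complex.betaIntegral s s =
      ((∫ p in (0 : ℝ)..1, (p * (1 - p)) ^ (s - 1) : ℝ) : ℂ) := by
    rw [Complex.betaIntegral, ← intervalIntegral.integral_ofReal]
    refine integral_congr fun p hp => (ofReal_mul_one_sub_rpow_sub_one ?_ s).symm
    rwa [uIcc_of_le zero_le_one] at hp
  have h := Complex.Gamma_mul_Gamma_eq_betaIntegral (s := s) (t := s) (by simpa) (by simpa)
  rw [hβ, ← Complex.ofReal_add, Complex.Gamma_ofReal, Complex.Gamma_ofReal,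
    ← Complex.ofReal_mul, ← Complex.ofReal_mul, Complex.ofReal_inj] at h
  rw [eq_div_iff (Gamma_pos_of_pos (by positivity)).ne', two_mul, sq, h, mul_comm]

theorem integral_two_mul_sub_one_mul_rpow (s : ℝ) :
    ∫ p in (0 : ℝ)..1, (2 * p - 1) * (p * (1 - p)) ^ s = 0 := by
  have h := intervalIntegral.integral_comp_sub_left
    (fun p : ℝ => (2 * p - 1) * (p * (1 - p)) ^ s) (a := 0) (b := 1) 1
  simp only [sub_zero, sub_self] at h
  have hodd : (fun p : ℝ => (2 * (1 - p) - 1) * ((1 - p) * (1 - (1 - p))) ^ s) =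
      fun p => -((2 * p - 1) * (p * (1 - p)) ^ s) := by
    funext p; rw [show (1 - p) * (1 - (1 - p)) = p * (1 - p) by ring]; ring
  rw [hodd, intervalIntegral.integral_neg] at h
  linarith

theorem hasDerivAt_mul_one_sub_rpow {p : ℝ} (hp : p ∈ Ioo (0 : ℝ) 1) (s : ℝ) :
    HasDerivAt (fun q => (q * (1 - q)) ^ s) (-(s * ((2 * p - 1) * (p * (1 - p)) ^ (s - 1)))) p := by
  have hbase : HasDerivAt (fun q : ℝ => q * (1 - q)) (1 * (1 - p) + p * (0 - 1)) p :=
    (hasDerivAt_id p).mul ((hasDerivAt_const p 1).sub (hasDerivAt_id p))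
  convert hbase.rpow_const (p := s) (.inl (mul_pos hp.1 (sub_pos.2 hp.2)).ne') using 1
  ring

theorem mul_one_sub_rpow_eq {p : ℝ} (hp : p ∈ Icc (0 : ℝ) 1) {s : ℝ} (hs : s ≠ 0) :
    (p * (1 - p)) ^ s = p * (1 - p) * (p * (1 - p)) ^ (s - 1) := by
  conv_lhs => rw [← sub_add_cancel s 1]
  rw [rpow_add_one' (mul_nonneg hp.1 (sub_nonneg.2 hp.2)) (by simpa using hs), mul_comm]

theorem hasDerivAt_integral_comp_add_mul {g a b v : ℝ → ℝ} (hg : ContDiff ℝ 1 g)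
    (ha : Continuous a) (hb : Continuous b) {c d : ℝ} (hv : IntervalIntegrable v volume c d)
    (y₀ : ℝ) :
    HasDerivAt (fun y => ∫ p in c..d, g (a p + y * b p) * v p)
      (∫ p in c..d, deriv g (a p + y₀ * b p) * b p * v p) y₀ := by
  have hg₁ : Differentiable ℝ g := hg.differentiable one_ne_zero
  have hg' : Continuous (deriv g) := hg.continuous_deriv le_rfl
  obtain ⟨M, hM⟩ :=
    ((isCompact_closedBall y₀ 1).prod isCompact_uIcc).exists_bound_of_continuousOn
    (f := fun q : ℝ × ℝ => deriv g (a q.2 + q.1 * b q.2) * b q.2) (by fun_prop)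
  have hvm : AEStronglyMeasurable v (volume.restrict (uIoc c d)) := hv.def'.aestronglyMeasurable
  refine (hasDerivAt_integral_of_dominated_loc_of_deriv_le
    (F := fun y p => g (a p + y * b p) * v p) (F' := fun y p => deriv g (a p + y * b p) * b p * v p)
    (bound := fun p => M * ‖v p‖)
    (Metric.ball_mem_nhds y₀ one_pos) (.of_forall fun y => ?_) ?_ ?_ ?_
    (hv.norm.const_mul M) (.of_forall fun p _ y _ => ?_)).2
  · exact (hg₁.continuous.comp (by fun_prop)).aestronglyMeasurable.mul hvm
  · exact hv.continuousOn_mul (hg₁.continuous.comp (by fun_prop)).continuousOn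
  · exact ((hg'.comp (by fun_prop)).mul hb).aestronglyMeasurable.mul hvm
  · refine .of_forall fun p hp y hy => ?_
    rw [norm_mul]
    exact mul_le_mul_of_nonneg_right
      (hM (y, p) ⟨Metric.ball_subset_closedBall hy, uIoc_subset_uIcc hp⟩) (norm_nonneg _)
  · have hinner : HasDerivAt (fun y => a p + y * b p) (b p) y := by
      simpa using ((hasDerivAt_id y).mul_const (b p)).const_add (a p)
    exact ((hg₁ _).hasDerivAt.comp y hinner).mul_const (v p)

noncomputable def weightedMean (v g : ℝ → ℝ) (x t : ℝ) : ℝ :=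
  ∫ p in (0 : ℝ)..1, g (x + t * (2 * p - 1)) * v p

section weightedMean

variable {v g h : ℝ → ℝ} {s : ℝ}

theorem hasDerivAt_weightedMean_left (hg : ContDiff ℝ 1 g) (hv : IntervalIntegrable v volume 0 1)
    (x t : ℝ) : HasDerivAt (fun y => weightedMean v g y t) (weightedMean v (deriv g) x t) x := by
  have h := hasDerivAt_integral_comp_add_mul hg (a := fun p => t * (2 * p - 1)) (b := fun _ => 1)
    (by fun_prop) (by fun_prop) hv x
  simp only [mul_one] at h
  simpa only [weightedMean, add_comm] using h

theorem hasDerivAt_weightedMean_right (hg : ContDiff ℝ 1 g) (hv : IntervalIntegrable v volume 0 1)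
    (x t : ℝ) :
    HasDerivAt (weightedMean v g x)
      (weightedMean (fun p => (2 * p - 1) * v p) (deriv g) x t) t := by
  have h := hasDerivAt_integral_comp_add_mul hg (a := fun _ => x) (b := fun p => 2 * p - 1)
    (by fun_prop) (by fun_prop) hv t
  unfold weightedMean
  simpa only [mul_assoc] using h

theorem weightedMean_zero_right (x : ℝ) :
    weightedMean v g x 0 = g x * ∫ p in (0 : ℝ)..1, v p := by
  simp [weightedMean, intervalIntegral.integral_const_mul]

/-- Integration by parts against `(p(1-p))^s`, which vanishes at both ends of `[0, 1]`. -/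
theorem two_mul_weightedMean_deriv (hh : ContDiff ℝ 1 h) (hs : 0 < s) (x t : ℝ) :
    2 * t * weightedMean (fun p => (p * (1 - p)) ^ s) (deriv h) x t =
      s * weightedMean (fun p => (2 * p - 1) * (p * (1 - p)) ^ (s - 1)) h x t := by
  have hh' : Continuous (deriv h) := hh.continuous_deriv le_rfl
  have hw : IntervalIntegrable (fun p => (2 * p - 1) * (p * (1 - p)) ^ (s - 1)) volume 0 1 :=
    (intervalIntegrable_mul_one_sub_rpow (by linarith)).continuousOn_mul (by fun_prop)
  have hW : Continuous fun p : ℝ => (p * (1 - p)) ^ s :=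
    (continuous_id.mul (continuous_const.sub continuous_id)).rpow_const fun _ => .inr hs.le
  set G : ℝ → ℝ := fun p => h (x + t * (2 * p - 1)) * (p * (1 - p)) ^ s
  have hG : ∀ p ∈ Ioo (0 : ℝ) 1, HasDerivAt G
      (2 * t * (deriv h (x + t * (2 * p - 1)) * (p * (1 - p)) ^ s) -
        s * (h (x + t * (2 * p - 1)) * ((2 * p - 1) * (p * (1 - p)) ^ (s - 1)))) p := by
    intro p hp
    have hinner : HasDerivAt (fun q => x + t * (2 * q - 1)) (t * (2 * 1)) p :=
      ((((hasDerivAt_id' p).const_mul 2).sub_const 1).const_mul t).const_add x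
    exact (((hh.differentiable one_ne_zero _).hasDerivAt.comp p hinner).mul
      (hasDerivAt_mul_one_sub_rpow hp s)).congr_deriv (by simp only [Function.comp_apply]; ring)
  have hI₁ : IntervalIntegrable (fun p => deriv h (x + t * (2 * p - 1)) * (p * (1 - p)) ^ s)
      volume 0 1 :=
    ((hh'.comp (by fun_prop)).mul hW).continuousOn.intervalIntegrable
  have hI₂ : IntervalIntegrable
      (fun p => h (x + t * (2 * p - 1)) * ((2 * p - 1) * (p * (1 - p)) ^ (s - 1))) volume 0 1 :=
    hw.continuousOn_mul (hh.continuous.comp (by fun_prop)).continuousOn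
  have hFTC := integral_eq_sub_of_hasDerivAt_of_le zero_le_one
    (by fun_prop : Continuous G).continuousOn hG ((hI₁.const_mul _).sub (hI₂.const_mul _))
  rw [intervalIntegral.integral_sub (hI₁.const_mul _) (hI₂.const_mul _),
    intervalIntegral.integral_const_mul, intervalIntegral.integral_const_mul] at hFTC
  simp [G, zero_rpow hs.ne'] at hFTC
  unfold weightedMean
  linarith

theorem weightedMean_sub_weightedMean_sq (hh : Continuous h) (hs : 0 < s) (x t : ℝ) :
    weightedMean (fun p => (p * (1 - p)) ^ (s - 1)) h x t -
        weightedMean (fun p => (2 * p - 1) * ((2 * p - 1) * (p * (1 - p)) ^ (s - 1))) h x t =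
      4 * weightedMean (fun p => (p * (1 - p)) ^ s) h x t := by
  have hw : IntervalIntegrable (fun p => (p * (1 - p)) ^ (s - 1)) volume 0 1 :=
    intervalIntegrable_mul_one_sub_rpow (by linarith)
  have hw₂ : IntervalIntegrable (fun p => (2 * p - 1) * ((2 * p - 1) * (p * (1 - p)) ^ (s - 1)))
      volume 0 1 :=
    (hw.continuousOn_mul (by fun_prop)).continuousOn_mul (by fun_prop)
  have hhx : ContinuousOn (fun p => h (x + t * (2 * p - 1))) (uIcc 0 1) :=
    (hh.comp (by fun_prop)).continuousOn
  unfold weightedMean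
  rw [← intervalIntegral.integral_sub (hw.continuousOn_mul hhx) (hw₂.continuousOn_mul hhx),
    ← intervalIntegral.integral_const_mul]
  refine integral_congr fun p hp => ?_
  rw [uIcc_of_le zero_le_one] at hp
  simp only [mul_one_sub_rpow_eq hp hs.ne']
  ring

end weightedMean

/-- for any `μ > 0`, the function
`u(x,t) = (Γ(μ)/Γ(μ/2)²) ∫₀¹ f(x+t(2p-1)) (p(1-p))^{μ/2-1} dp`
solves the Cauchy problem `u_xx = u_tt + (μ/t) u_t`, `u(x,0) = f(x)`, `u_t(x,0) = 0`. -/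
theorem epd_cauchy_solution (μ : ℝ) (hμ : 0 < μ) (f : ℝ → ℝ) (hf : ContDiff ℝ 2 f)
    (u : ℝ → ℝ → ℝ)
    (hu : ∀ x t : ℝ, u x t =
      Real.Gamma μ / (Real.Gamma (μ / 2)) ^ 2 *
        ∫ p in (0 : ℝ)..1, f (x + t * (2 * p - 1)) * (p * (1 - p)) ^ (μ / 2 - 1)) :
    (∀ x t : ℝ, 0 < t →
      deriv (deriv (fun x' => u x' t)) x =
        deriv (deriv (u x)) t + (μ / t) * deriv (u x) t) ∧
    (∀ x : ℝ, Tendsto (u x) (nhdsWithin 0 (Set.Ioi (0 : ℝ))) (nhds (f x))) ∧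
    (∀ x : ℝ, Tendsto (fun t => deriv (u x) t) (nhdsWithin 0 (Set.Ioi (0 : ℝ))) (nhds 0)) := by
  set C := Gamma μ / Gamma (μ / 2) ^ 2 with hC
  set w : ℝ → ℝ := fun p => (p * (1 - p)) ^ (μ / 2 - 1)
  have hw : IntervalIntegrable w volume 0 1 := intervalIntegrable_mul_one_sub_rpow (by linarith)
  have hw₁ : IntervalIntegrable (fun p => (2 * p - 1) * w p) volume 0 1 :=
    hw.continuousOn_mul (by fun_prop)
  have hf₁ : ContDiff ℝ 1 f := hf.of_le one_le_two
  have hf' : ContDiff ℝ 1 (deriv f) := hf.deriv'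
  obtain rfl : u = fun x t => C * weightedMean w f x t := funext₂ hu
  have hu_t (x τ : ℝ) : HasDerivAt (fun τ => C * weightedMean w f x τ)
      (C * weightedMean (fun p => (2 * p - 1) * w p) (deriv f) x τ) τ :=
    (hasDerivAt_weightedMean_right hf₁ hw x τ).const_mul C
  have hu_t' (x : ℝ) : deriv (fun τ => C * weightedMean w f x τ) =
      fun τ => C * weightedMean (fun p => (2 * p - 1) * w p) (deriv f) x τ :=
    funext fun τ => (hu_t x τ).deriv
  refine ⟨fun x t ht => ?_, fun x => ?_, fun x => ?_⟩
  · have hxx : deriv (deriv fun y => C * weightedMean w f y t) x =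
        C * weightedMean w (deriv (deriv f)) x t := by
      rw [funext fun y => ((hasDerivAt_weightedMean_left hf₁ hw y t).const_mul C).deriv]
      exact ((hasDerivAt_weightedMean_left hf' hw x t).const_mul C).deriv
    have htt : deriv (deriv fun τ => C * weightedMean w f x τ) t =
        C * weightedMean (fun p => (2 * p - 1) * ((2 * p - 1) * w p)) (deriv (deriv f)) x t := by
      rw [hu_t']
      exact ((hasDerivAt_weightedMean_right hf' hw₁ x t).const_mul C).deriv
    have hibp : 4 * weightedMean (fun p => (p * (1 - p)) ^ (μ / 2)) (deriv (deriv f)) x t =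
        μ / t * weightedMean (fun p => (2 * p - 1) * w p) (deriv f) x t := by
      rw [div_mul_eq_mul_div, eq_div_iff ht.ne']
      linear_combination 2 * two_mul_weightedMean_deriv hf' (half_pos hμ) x t
    rw [hxx, htt, hu_t', ← sub_eq_iff_eq_add', ← mul_sub,
      weightedMean_sub_weightedMean_sq (hf'.continuous_deriv le_rfl) (half_pos hμ), hibp]
    ring
  · have hu₀ : C * weightedMean w f x 0 = f x := by
      rw [weightedMean_zero_right, integral_mul_one_sub_rpow_sub_one (half_pos hμ),
        show 2 * (μ / 2) = μ by ring, hC]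
      field_simp [(Gamma_pos_of_pos hμ).ne', (Gamma_pos_of_pos (half_pos hμ)).ne']
    have h := (hu_t x 0).continuousAt.tendsto.mono_left (nhdsWithin_le_nhds (s := Ioi 0))
    rwa [hu₀] at h
  · have h0 : C * weightedMean (fun p => (2 * p - 1) * w p) (deriv f) x 0 = 0 := by
      rw [weightedMean_zero_right, integral_two_mul_sub_one_mul_rpow, mul_zero, mul_zero]
    have h := ((hasDerivAt_weightedMean_right hf' hw₁ x 0).const_mul C).continuousAt.tendsto
      |>.mono_left (nhdsWithin_le_nhds (s := Ioi 0))
    rw [h0] at h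
    simpa only [hu_t' x] using h
end
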